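/- There is a binary polynomial G of K whose restriction to {q⁰,q²} is the semilattice join with respect to the componentwise order (in which q² < q⁰): G(q²,q²) = q² and G(q⁰,q⁰) = G(q⁰,q²) = G(q²,q⁰) = q⁰. (Lemma 4.2(5); such a G is given by G(x,y) = G₀⁻¹(T₀(G₀(T₁(x,y)))) where G₀ is the composition of the machine operations simulating the halting computation and G₀⁻¹ the composition of the corresponding reverse operations in reverse order.) -/

import Mathlib

namespace Paper

/-- Direction of a Turing-machine head move. -/
inductive Dir : Type
  | L | R
deriving DecidableEq

/-- A Turing machine with states μ₀, μ₁, …, μ_k (μ₀ the halting state): for each state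
μ_i with 1 ≤ i ≤ k and each tape symbol r, exactly one instruction μ_i r s D μ_m,
recorded as `instr i r = (s, D, m)`.  (The value of `instr` at `i = 0` is irrelevant:
no instruction begins with μ₀.) -/
structure TM (k : ℕ) : Type where
  instr : Fin (k + 1) → Bool → Bool × Dir × Fin (k + 1)

/-- The universe of the algebra B(T):
`zero` = 0, `P j` = P_j, `one`,`two`,`H` the sequential elements U, and the machine
elements `C b i r s` = C_{ir}^s, `D b i r s` = D_{ir}^s, `M b i r` = M_i^r, where
`b = true` marks the barred copy V̄. -/
inductive BT (k : ℕ) : Type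
  | zero : BT k
  | P : Fin 3 → BT k
  | one : BT k
  | two : BT k
  | H : BT k
  | C : Bool → Fin (k + 1) → Bool → Bool → BT k
  | D : Bool → Fin (k + 1) → Bool → Bool → BT k
  | M : Bool → Fin (k + 1) → Bool → BT k
deriving DecidableEq

namespace BT

variable {k : ℕ}

/-- The partial order of B(T): x ≤ y iff x = 0, or x = y, or (x = P₂ and y ∈ {P₀,P₁}). -/
def le (x y : BT k) : Prop :=
  x = zero ∨ x = y ∨ (x = P 2 ∧ (y = P 0 ∨ y = P 1))

/-- x ∧ y: the greatest lower bound for `le`. -/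
def meet (x y : BT k) : BT k :=
  if x = y then x
  else if x = P 2 ∧ (y = P 0 ∨ y = P 1) then P 2
  else if y = P 2 ∧ (x = P 0 ∨ x = P 1) then P 2
  else if (x = P 0 ∨ x = P 1) ∧ (y = P 0 ∨ y = P 1) then P 2
  else zero

/-- membership in P = {P₀,P₁,P₂} -/
def isP : BT k → Bool
  | P _ => true
  | _ => false

/-- membership in U = {1,2,H} -/
def isU : BT k → Bool
  | one => true
  | two => true
  | H => true
  | _ => false

/-- membership in V ∪ V̄ -/
def isVV : BT k → Bool
  | C _ _ _ _ => true
  | D _ _ _ _ => true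
  | M _ _ _ => true
  | _ => false

/-- membership in U ∪ V ∪ V̄ -/
def isUVV (x : BT k) : Bool := isU x || isVV x

/-- membership in V₀ = {C_{0r}^s, D_{0r}^s, M₀^r} (unbarred, state μ₀) -/
def isV0 : BT k → Bool
  | C false i _ _ => i == 0
  | D false i _ _ => i == 0
  | M false i _ => i == 0
  | _ => false

/-- membership in V₁₀⁰ = {C₁₀⁰, M₁⁰, D₁₀⁰} -/
def isV10 (x : BT k) : Bool :=
  x == C false 1 false false || x == M false 1 false || x == D false 1 false false

/-- the bar involution on V ∪ V̄ (identity elsewhere) -/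
def barOp : BT k → BT k
  | C b i r s => C (!b) i r s
  | D b i r s => D (!b) i r s
  | M b i r => M (!b) i r
  | x => x

/-- s₀ = C₁₀⁰, s₁ = M₁⁰, s₂ = D₁₀⁰ -/
def sel : Fin 3 → BT k := ![C false 1 false false, M false 1 false, D false 1 false false]

/-- x ∧ⁱ y = x if x = y ∈ (P ∪ V₁₀⁰) \ {s_i}, else 0. -/
def meetI (i : Fin 3) (x y : BT k) : BT k :=
  if x = y ∧ (isP x ∨ isV10 x) ∧ x ≠ sel i then x else zero

/-- T₀(x) = P₂ if x ∈ {P₀,P₂}; P₀ if x = P₁; x if x ∈ V₀; else 0. -/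
def T0 : BT k → BT k
  | P j => if j = 1 then P 0 else P 2
  | C false i r s => if i = 0 then C false i r s else zero
  | D false i r s => if i = 0 then D false i r s else zero
  | M false i r => if i = 0 then M false i r else zero
  | _ => zero

/-- T₁(x,y). -/
def T1 (x y : BT k) : BT k :=
  if (x = P 0 ∧ y = P 0) ∨ (x = P 0 ∧ y = P 1) ∨ (x = P 1 ∧ y = P 0) ∨
     (x = P 0 ∧ y = P 2) ∨ (x = P 2 ∧ y = P 0) then P 1
  else if (x = P 1 ∨ x = P 2) ∧ (y = P 1 ∨ y = P 2) then P 2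
  else if x = y ∧ isV10 x then x
  else zero

/-- J′(x,y,z) = x ∧ z if x = y or {x,y} ⊆ P; x if x = ȳ ∈ V ∪ V̄; else 0. -/
def J' (x y z : BT k) : BT k :=
  if x = y ∨ (isP x ∧ isP y) then meet x z
  else if isVV y ∧ x = barOp y then x
  else zero

/-- the ternary discriminator: t(x,y,z) = z if x = y, else x. -/
def disc (x y z : BT k) : BT k := if x = y then z else x

/-- S₁(u,x,y,z). -/
def S1 (u x y z : BT k) : BT k :=
  if (u = one ∨ u = two) ∧ x = y ∧ y = z ∧ isUVV x then x
  else if isP x ∧ isP y ∧ isP z then disc x y z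
  else zero

/-- S₂(u,v,x,y,z). -/
def S2 (u v x y z : BT k) : BT k :=
  if isVV v ∧ u = barOp v ∧ x = y ∧ y = z ∧ isVV x then x
  else if isP x ∧ isP y ∧ isP z then disc x y z
  else zero

/-- L_{irt} for the instruction μ_i r s L μ_m (the barred clause is handled by carrying
the bar `b` of the argument through). -/
def Lop (i : Fin (k + 1)) (r s : Bool) (m : Fin (k + 1)) (t : Bool) :
    BT k → BT k → BT k → BT k := fun x y u =>
  match u with
  | P j => if x = one ∧ y = one then P j else zero
  | C b i' r' s' =>
      if x = one ∧ y = one ∧ i' = i ∧ r' = r then C b m t s'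
      else if x = H ∧ y = one ∧ i' = i ∧ r' = r ∧ s' = t then M b m t
      else zero
  | M b i' r' => if x = two ∧ y = H ∧ i' = i ∧ r' = r then D b m t s else zero
  | D b i' r' s' => if x = two ∧ y = two ∧ i' = i ∧ r' = r then D b m t s' else zero
  | _ => zero

/-- R_{irt} for the instruction μ_i r s R μ_m. -/
def Rop (i : Fin (k + 1)) (r s : Bool) (m : Fin (k + 1)) (t : Bool) :
    BT k → BT k → BT k → BT k := fun x y u =>
  match u with
  | P j => if x = one ∧ y = one then P j else zero
  | C b i' r' s' => if x = one ∧ y = one ∧ i' = i ∧ r' = r then C b m t s' else zero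
  | M b i' r' => if x = H ∧ y = one ∧ i' = i ∧ r' = r then C b m t s else zero
  | D b i' r' s' =>
      if x = two ∧ y = H ∧ i' = i ∧ r' = r ∧ s' = t then M b m t
      else if x = two ∧ y = two ∧ i' = i ∧ r' = r then D b m t s'
      else zero
  | _ => zero

end BT

/-- The forward machine operation determined by the unique instruction of T beginning
with μ_i r (for 1 ≤ i ≤ k) and the symbol t. -/
def fwd {k : ℕ} (T : TM k) (i : Fin (k + 1)) (r t : Bool) :
    BT k → BT k → BT k → BT k :=
  match T.instr i r with
  | (s, Dir.L, m) => BT.Lop i r s m t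
  | (s, Dir.R, m) => BT.Rop i r s m t

/-- the reverse of a machine operation: F°(x,y,u) = v when F(x,y,v) = u ≠ 0, else 0. -/
noncomputable def revOp {k : ℕ} (F : BT k → BT k → BT k → BT k) (x y u : BT k) : BT k :=
  haveI := Classical.propDecidable (u ≠ BT.zero ∧ ∃ v, F x y v = u)
  if h : u ≠ BT.zero ∧ ∃ v, F x y v = u then h.2.choose else BT.zero

/-- The machine operations ℳ: `b = false` gives the forward operation, `b = true` the
reverse operation. -/
noncomputable def mop {k : ℕ} (T : TM k) (i : Fin (k + 1)) (r t : Bool) (b : Bool) :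
    BT k → BT k → BT k → BT k :=
  match b with
  | false => fwd T i r t
  | true => revOp (fwd T i r t)

/-- The relation ≺ on U: 2≺2, 2≺H, H≺1, 1≺1. -/
def prec {k : ℕ} : BT k → BT k → Bool
  | BT.two, BT.two => true
  | BT.two, BT.H => true
  | BT.H, BT.one => true
  | BT.one, BT.one => true
  | _, _ => false

/-- U_i¹ built from the machine operation F. -/
def U1op {k : ℕ} (F : BT k → BT k → BT k → BT k) (x y z u : BT k) : BT k :=
  if prec x y ∧ prec x z ∧ y ≠ z ∧ BT.isVV (F x y u) then BT.barOp (F x y u)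
  else if prec x y ∧ y = z then F x y u
  else BT.zero

/-- U_i² built from the machine operation F. -/
def U2op {k : ℕ} (F : BT k → BT k → BT k → BT k) (x y z u : BT k) : BT k :=
  if prec x z ∧ prec y z ∧ x ≠ y ∧ BT.isVV (F y z u) then BT.barOp (F y z u)
  else if x = y ∧ prec y z then F y z u
  else BT.zero

/-- The n-ary polynomials of the algebra B(T): functions obtained by composing the basic
operations (the constant 0, T₀, T₁, ∧, ∧⁰, ∧¹, ∧², J′, S₁, S₂, the forward and reverse
machine operations, and the U_i¹, U_i²), coordinate projections and constants. -/
inductive PolyB {k : ℕ} (T : TM k) : {n : ℕ} → ((Fin n → BT k) → BT k) → Prop where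
  | proj {n : ℕ} (i : Fin n) : PolyB T fun v => v i
  | const {n : ℕ} (c : BT k) : PolyB T fun _ : Fin n → BT k => c
  | t0 {n : ℕ} {p : (Fin n → BT k) → BT k} :
      PolyB T p → PolyB T fun v => BT.T0 (p v)
  | t1 {n : ℕ} {p q : (Fin n → BT k) → BT k} :
      PolyB T p → PolyB T q → PolyB T fun v => BT.T1 (p v) (q v)
  | meet {n : ℕ} {p q : (Fin n → BT k) → BT k} :
      PolyB T p → PolyB T q → PolyB T fun v => BT.meet (p v) (q v)
  | meetI (j : Fin 3) {n : ℕ} {p q : (Fin n → BT k) → BT k} :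
      PolyB T p → PolyB T q → PolyB T fun v => BT.meetI j (p v) (q v)
  | jop {n : ℕ} {p q r : (Fin n → BT k) → BT k} :
      PolyB T p → PolyB T q → PolyB T r → PolyB T fun v => BT.J' (p v) (q v) (r v)
  | s1 {n : ℕ} {p q r s : (Fin n → BT k) → BT k} :
      PolyB T p → PolyB T q → PolyB T r → PolyB T s →
      PolyB T fun v => BT.S1 (p v) (q v) (r v) (s v)
  | s2 {n : ℕ} {p q r s w : (Fin n → BT k) → BT k} :
      PolyB T p → PolyB T q → PolyB T r → PolyB T s → PolyB T w →
      PolyB T fun v => BT.S2 (p v) (q v) (r v) (s v) (w v)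
  | mach (i : Fin (k + 1)) (hi : i ≠ 0) (r t b : Bool) {n : ℕ}
      {p q u : (Fin n → BT k) → BT k} :
      PolyB T p → PolyB T q → PolyB T u →
      PolyB T fun v => mop T i r t b (p v) (q v) (u v)
  | u1 (i : Fin (k + 1)) (hi : i ≠ 0) (r t b : Bool) {n : ℕ}
      {p q r' s : (Fin n → BT k) → BT k} :
      PolyB T p → PolyB T q → PolyB T r' → PolyB T s →
      PolyB T fun v => U1op (mop T i r t b) (p v) (q v) (r' v) (s v)
  | u2 (i : Fin (k + 1)) (hi : i ≠ 0) (r t b : Bool) {n : ℕ}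
      {p q r' s : (Fin n → BT k) → BT k} :
      PolyB T p → PolyB T q → PolyB T r' → PolyB T s →
      PolyB T fun v => U2op (mop T i r t b) (p v) (q v) (r' v) (s v)

/-- unary polynomials of B(T) -/
def UPolyB {k : ℕ} (T : TM k) (F : BT k → BT k) : Prop :=
  PolyB T (n := 1) fun v => F (v 0)

/-- binary polynomials of B(T) -/
def BPolyB {k : ℕ} (T : TM k) (F : BT k → BT k → BT k) : Prop :=
  PolyB T (n := 2) fun v => F (v 0) (v 1)

/-- A Turing machine configuration ⟨tape, head position, state⟩. -/
structure Cfg (k : ℕ) : Type where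
  tape : ℤ → Bool
  pos : ℤ
  state : Fin (k + 1)

/-- One computation step of T (halted configurations, in state μ₀, are fixed). -/
def cfgStep {k : ℕ} (T : TM k) (c : Cfg k) : Cfg k :=
  if c.state = 0 then c
  else
    match T.instr c.state (c.tape c.pos) with
    | (s, Dir.L, m) => ⟨Function.update c.tape c.pos s, c.pos - 1, m⟩
    | (s, Dir.R, m) => ⟨Function.update c.tape c.pos s, c.pos + 1, m⟩

/-- The initial configuration Q₀ = ⟨t₀, 0, μ₁⟩, t₀ the all-zero tape. -/
def Q0 (k : ℕ) : Cfg k := ⟨fun _ => false, 0, 1⟩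

/-- N = {n₀,…,n_m} ∪ {−1,0,1}: the squares visited during the halting computation
Q₀, …, Q_m, together with −1, 0, 1. -/
def Nset {k : ℕ} (T : TM k) (m : ℕ) : Finset ℤ :=
  ((Finset.range (m + 1)).image fun j => ((cfgStep T)^[j] (Q0 k)).pos) ∪ {-1, 0, 1}

/-- The universe of the direct power A = B(T)^Y, where Y = {s₀} ∪ N: the coordinate
`none` is the extra coordinate s₀ ∉ N, and `some x` the coordinate x ∈ N. -/
abbrev AA {k : ℕ} (T : TM k) (m : ℕ) : Type := Option {x : ℤ // x ∈ Nset T m} → BT k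

/-- The sequential generator a_n (n ∈ N). -/
def aEl {k : ℕ} (T : TM k) (m : ℕ) (n : ℤ) : AA T m := fun y =>
  match y with
  | none => BT.one
  | some x => if x.1 < n then BT.one else if x.1 = n then BT.H else BT.two

/-- The generator q^j (j ∈ {0,1,2}). -/
def qEl {k : ℕ} (T : TM k) (m : ℕ) (j : Fin 3) : AA T m := fun y =>
  match y with
  | none => BT.P j
  | some x =>
      if x.1 < 0 then BT.C false 1 false false
      else if x.1 = 0 then BT.M false 1 false
      else BT.D false 1 false false

/-- K: the subalgebra of A = B(T)^Y generated by S ∪ {q⁰,q¹,q²}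
(operations computed coordinatewise). -/
inductive InK {k : ℕ} (T : TM k) (m : ℕ) : AA T m → Prop where
  | gen_a (n : ℤ) (hn : n ∈ Nset T m) : InK T m (aEl T m n)
  | gen_q (j : Fin 3) : InK T m (qEl T m j)
  | zeroOp : InK T m fun _ => BT.zero
  | t0 {f : AA T m} : InK T m f → InK T m fun y => BT.T0 (f y)
  | t1 {f g : AA T m} : InK T m f → InK T m g → InK T m fun y => BT.T1 (f y) (g y)
  | meet {f g : AA T m} : InK T m f → InK T m g → InK T m fun y => BT.meet (f y) (g y)
  | meetI (j : Fin 3) {f g : AA T m} :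
      InK T m f → InK T m g → InK T m fun y => BT.meetI j (f y) (g y)
  | jop {f g h : AA T m} : InK T m f → InK T m g → InK T m h →
      InK T m fun y => BT.J' (f y) (g y) (h y)
  | s1 {f g h p : AA T m} : InK T m f → InK T m g → InK T m h → InK T m p →
      InK T m fun y => BT.S1 (f y) (g y) (h y) (p y)
  | s2 {f g h p q : AA T m} : InK T m f → InK T m g → InK T m h → InK T m p → InK T m q →
      InK T m fun y => BT.S2 (f y) (g y) (h y) (p y) (q y)
  | mach (i : Fin (k + 1)) (hi : i ≠ 0) (r t b : Bool) {f g h : AA T m} :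
      InK T m f → InK T m g → InK T m h →
      InK T m fun y => mop T i r t b (f y) (g y) (h y)
  | u1 (i : Fin (k + 1)) (hi : i ≠ 0) (r t b : Bool) {f g h p : AA T m} :
      InK T m f → InK T m g → InK T m h → InK T m p →
      InK T m fun y => U1op (mop T i r t b) (f y) (g y) (h y) (p y)
  | u2 (i : Fin (k + 1)) (hi : i ≠ 0) (r t b : Bool) {f g h p : AA T m} :
      InK T m f → InK T m g → InK T m h → InK T m p →
      InK T m fun y => U2op (mop T i r t b) (f y) (g y) (h y) (p y)

/-- The n-ary polynomials of the algebra K: compositions of the basic operations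
(computed coordinatewise), coordinate projections, and constants from K. -/
inductive PolyK {k : ℕ} (T : TM k) (m : ℕ) :
    {n : ℕ} → ((Fin n → AA T m) → AA T m) → Prop where
  | proj {n : ℕ} (i : Fin n) : PolyK T m fun v => v i
  | const {n : ℕ} (c : AA T m) (hc : InK T m c) : PolyK T m fun _ : Fin n → AA T m => c
  | zeroOp {n : ℕ} : PolyK T m fun (_ : Fin n → AA T m) _ => BT.zero
  | t0 {n : ℕ} {p : (Fin n → AA T m) → AA T m} :
      PolyK T m p → PolyK T m fun v y => BT.T0 (p v y)
  | t1 {n : ℕ} {p q : (Fin n → AA T m) → AA T m} :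
      PolyK T m p → PolyK T m q → PolyK T m fun v y => BT.T1 (p v y) (q v y)
  | meet {n : ℕ} {p q : (Fin n → AA T m) → AA T m} :
      PolyK T m p → PolyK T m q → PolyK T m fun v y => BT.meet (p v y) (q v y)
  | meetI (j : Fin 3) {n : ℕ} {p q : (Fin n → AA T m) → AA T m} :
      PolyK T m p → PolyK T m q → PolyK T m fun v y => BT.meetI j (p v y) (q v y)
  | jop {n : ℕ} {p q r : (Fin n → AA T m) → AA T m} :
      PolyK T m p → PolyK T m q → PolyK T m r →
      PolyK T m fun v y => BT.J' (p v y) (q v y) (r v y)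
  | s1 {n : ℕ} {p q r s : (Fin n → AA T m) → AA T m} :
      PolyK T m p → PolyK T m q → PolyK T m r → PolyK T m s →
      PolyK T m fun v y => BT.S1 (p v y) (q v y) (r v y) (s v y)
  | s2 {n : ℕ} {p q r s w : (Fin n → AA T m) → AA T m} :
      PolyK T m p → PolyK T m q → PolyK T m r → PolyK T m s → PolyK T m w →
      PolyK T m fun v y => BT.S2 (p v y) (q v y) (r v y) (s v y) (w v y)
  | mach (i : Fin (k + 1)) (hi : i ≠ 0) (r t b : Bool) {n : ℕ}
      {p q u : (Fin n → AA T m) → AA T m} :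
      PolyK T m p → PolyK T m q → PolyK T m u →
      PolyK T m fun v y => mop T i r t b (p v y) (q v y) (u v y)
  | u1 (i : Fin (k + 1)) (hi : i ≠ 0) (r t b : Bool) {n : ℕ}
      {p q r' s : (Fin n → AA T m) → AA T m} :
      PolyK T m p → PolyK T m q → PolyK T m r' → PolyK T m s →
      PolyK T m fun v y => U1op (mop T i r t b) (p v y) (q v y) (r' v y) (s v y)
  | u2 (i : Fin (k + 1)) (hi : i ≠ 0) (r t b : Bool) {n : ℕ}
      {p q r' s : (Fin n → AA T m) → AA T m} :
      PolyK T m p → PolyK T m q → PolyK T m r' → PolyK T m s →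
      PolyK T m fun v y => U2op (mop T i r t b) (p v y) (q v y) (r' v y) (s v y)

/-- unary polynomials of K -/
def UPolyK {k : ℕ} (T : TM k) (m : ℕ) (F : AA T m → AA T m) : Prop :=
  PolyK T m (n := 1) fun v => F (v 0)

/-- binary polynomials of K -/
def BPolyK {k : ℕ} (T : TM k) (m : ℕ) (F : AA T m → AA T m → AA T m) : Prop :=
  PolyK T m (n := 2) fun v => F (v 0) (v 1)

/-- Q ∈ Cfg⋆: T, started in configuration Q, reaches the halting configuration
Q_m in finitely many steps, the head visiting only squares in N. -/
def InCfgStar {k : ℕ} (T : TM k) (m : ℕ) (Q : Cfg k) : Prop :=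
  ∃ j : ℕ, (cfgStep T)^[j] Q = (cfgStep T)^[m] (Q0 k) ∧
    ∀ l ≤ j, ((cfgStep T)^[l] Q).pos ∈ Nset T m

/-- β^j(Q): the encoding of the configuration Q (with P_j in coordinate s₀). -/
def betaEl {k : ℕ} (T : TM k) (m : ℕ) (j : Fin 3) (Q : Cfg k) : AA T m := fun y =>
  match y with
  | none => BT.P j
  | some x =>
      if x.1 < Q.pos then BT.C false Q.state (Q.tape Q.pos) (Q.tape x.1)
      else if x.1 = Q.pos then BT.M false Q.state (Q.tape Q.pos)
      else BT.D false Q.state (Q.tape Q.pos) (Q.tape x.1)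

/-- K₀ = {f ∈ K : f(x) = 0 for some x ∈ N}. -/
def K0 {k : ℕ} (T : TM k) (m : ℕ) : Set (AA T m) :=
  {f | InK T m f ∧ ∃ x : {x : ℤ // x ∈ Nset T m}, f (some x) = BT.zero}

/-- S = {a_n : n ∈ N}. -/
def Sset {k : ℕ} (T : TM k) (m : ℕ) : Set (AA T m) :=
  {f | ∃ n ∈ Nset T m, f = aEl T m n}

/-- Λ = {β^j(Q) : Q ∈ Cfg⋆, j ∈ {0,1,2}}. -/
def Lam {k : ℕ} (T : TM k) (m : ℕ) : Set (AA T m) :=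
  {f | ∃ (j : Fin 3) (Q : Cfg k), InCfgStar T m Q ∧ f = betaEl T m j Q}

/-- θ: (f,g) ∈ θ iff f, g ∈ K and for every unary polynomial F of K,
F(f) = q² ⇔ F(g) = q². -/
def theta {k : ℕ} (T : TM k) (m : ℕ) (f g : AA T m) : Prop :=
  InK T m f ∧ InK T m g ∧
    ∀ F : AA T m → AA T m, UPolyK T m F → (F f = qEl T m 2 ↔ F g = qEl T m 2)

/-- A congruence of K: an equivalence relation on K preserved by all basic operations. -/
structure IsCongK {k : ℕ} (T : TM k) (m : ℕ) (R : AA T m → AA T m → Prop) : Prop where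
  refl : ∀ f, InK T m f → R f f
  symm : ∀ {f g}, R f g → R g f
  trans : ∀ {f g h}, R f g → R g h → R f h
  dom : ∀ {f g}, R f g → InK T m f ∧ InK T m g
  t0 : ∀ {f f'}, R f f' → R (fun y => BT.T0 (f y)) (fun y => BT.T0 (f' y))
  t1 : ∀ {f f' g g'}, R f f' → R g g' →
    R (fun y => BT.T1 (f y) (g y)) (fun y => BT.T1 (f' y) (g' y))
  meet : ∀ {f f' g g'}, R f f' → R g g' →
    R (fun y => BT.meet (f y) (g y)) (fun y => BT.meet (f' y) (g' y))
  meetI : ∀ (j : Fin 3) {f f' g g'}, R f f' → R g g' →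
    R (fun y => BT.meetI j (f y) (g y)) (fun y => BT.meetI j (f' y) (g' y))
  jop : ∀ {f f' g g' h h'}, R f f' → R g g' → R h h' →
    R (fun y => BT.J' (f y) (g y) (h y)) (fun y => BT.J' (f' y) (g' y) (h' y))
  s1 : ∀ {f f' g g' h h' p p'}, R f f' → R g g' → R h h' → R p p' →
    R (fun y => BT.S1 (f y) (g y) (h y) (p y))
      (fun y => BT.S1 (f' y) (g' y) (h' y) (p' y))
  s2 : ∀ {f f' g g' h h' p p' q q'}, R f f' → R g g' → R h h' → R p p' → R q q' →
    R (fun y => BT.S2 (f y) (g y) (h y) (p y) (q y))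
      (fun y => BT.S2 (f' y) (g' y) (h' y) (p' y) (q' y))
  mach : ∀ (i : Fin (k + 1)), i ≠ 0 → ∀ (r t b : Bool) {f f' g g' h h'},
    R f f' → R g g' → R h h' →
    R (fun y => mop T i r t b (f y) (g y) (h y))
      (fun y => mop T i r t b (f' y) (g' y) (h' y))
  u1 : ∀ (i : Fin (k + 1)), i ≠ 0 → ∀ (r t b : Bool) {f f' g g' h h' p p'},
    R f f' → R g g' → R h h' → R p p' →
    R (fun y => U1op (mop T i r t b) (f y) (g y) (h y) (p y))
      (fun y => U1op (mop T i r t b) (f' y) (g' y) (h' y) (p' y))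
  u2 : ∀ (i : Fin (k + 1)), i ≠ 0 → ∀ (r t b : Bool) {f f' g g' h h' p p'},
    R f f' → R g g' → R h h' → R p p' →
    R (fun y => U2op (mop T i r t b) (f y) (g y) (h y) (p y))
      (fun y => U2op (mop T i r t b) (f' y) (g' y) (h' y) (p' y))

/-- θ̄: the smallest congruence of K containing θ ∪ {(q⁰,q²)} (the intersection of all
congruences of K containing θ and (q⁰,q²)). -/
def thetaBar {k : ℕ} (T : TM k) (m : ℕ) (f g : AA T m) : Prop :=
  InK T m f ∧ InK T m g ∧
    ∀ R : AA T m → AA T m → Prop, IsCongK T m R → (∀ a b, theta T m a b → R a b) →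
      R (qEl T m 0) (qEl T m 2) → R f g


/-! The encoding `β^j(Q)` of a configuration is carried one computation step forward by the
machine operation of the instruction applied in `Q`, with the sequential elements `a_n` at the
two head positions involved as constant arguments, and one step back by the reverse operation,
since machine operations are injective away from `0`. So `G(x,y) = G₀⁻¹(T₀(G₀(T₁(x,y))))` works:
`T₁` sends `(q²,q²)` to `q²` and the other three pairs to `q¹`, `G₀` runs the halting
computation, after which the state is `μ₀` and `T₀` changes only the coordinate `s₀`
(`P₁ ↦ P₀`, `P₂ ↦ P₂`), and `G₀⁻¹` runs the computation back, ending at `q⁰` or `q²`. -/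

section Encoding

variable {k : ℕ} {T : TM k} {m : ℕ}

lemma betaEl_ne_zero (j : Fin 3) (Q : Cfg k) (y : Option {x : ℤ // x ∈ Nset T m}) :
    betaEl T m j Q y ≠ BT.zero := by
  rcases y with _ | x
  · simp [betaEl]
  · simp only [betaEl]; split_ifs <;> simp

lemma qEl_eq_betaEl_Q0 (j : Fin 3) : qEl T m j = betaEl T m j (Q0 k) := by
  funext y
  rcases y with _ | x
  · rfl
  · simp only [qEl, betaEl, Q0]; split_ifs <;> simp_all

lemma T1_qEl {a b c : Fin 3} (h : BT.T1 (k := k) (BT.P a) (BT.P b) = BT.P c) :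
    (fun y => BT.T1 (qEl T m a y) (qEl T m b y)) = qEl T m c := by
  funext y
  rcases y with _ | x
  · exact h
  · simp only [qEl]; split_ifs <;> simp [BT.T1, BT.isV10]

lemma T0_betaEl {Q : Cfg k} (hQ : Q.state = 0) {j j' : Fin 3}
    (h : BT.T0 (k := k) (BT.P j) = BT.P j') :
    (fun y => BT.T0 (betaEl T m j Q y)) = betaEl T m j' Q := by
  funext y
  rcases y with _ | x
  · exact h
  · simp only [betaEl, hQ]; split_ifs <;> simp [BT.T0]

lemma Lop_aEl_betaEl (i i' : Fin (k + 1)) (s : Bool) (tp : ℤ → Bool) (p : ℤ) (j : Fin 3)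
    (y : Option {x : ℤ // x ∈ Nset T m}) :
    BT.Lop i (tp p) s i' (tp (p - 1)) (aEl T m (p - 1) y) (aEl T m p y)
      (betaEl T m j ⟨tp, p, i⟩ y)
    = betaEl T m j ⟨Function.update tp p s, p - 1, i'⟩ y := by
  rcases y with _ | ⟨w, hw⟩
  · simp [aEl, betaEl, BT.Lop]
  · simp only [aEl, betaEl]
    rcases lt_trichotomy w (p - 1) with h | rfl | h
    · simp [BT.Lop, h, show w < p by omega, show w ≠ p by omega]
    · simp [BT.Lop]
    · rcases (show w = p ∨ p < w by omega) with rfl | h'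
      · simp [BT.Lop, show ¬ w < w - 1 by omega, show w ≠ w - 1 by omega]
      · simp [BT.Lop, show ¬ w < p by omega, show ¬ w < p - 1 by omega, show w ≠ p by omega,
          show w ≠ p - 1 by omega]

lemma Rop_aEl_betaEl (i i' : Fin (k + 1)) (s : Bool) (tp : ℤ → Bool) (p : ℤ) (j : Fin 3)
    (y : Option {x : ℤ // x ∈ Nset T m}) :
    BT.Rop i (tp p) s i' (tp (p + 1)) (aEl T m p y) (aEl T m (p + 1) y)
      (betaEl T m j ⟨tp, p, i⟩ y)
    = betaEl T m j ⟨Function.update tp p s, p + 1, i'⟩ y := by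
  rcases y with _ | ⟨w, hw⟩
  · simp [aEl, betaEl, BT.Rop]
  · simp only [aEl, betaEl]
    rcases lt_trichotomy w p with h | rfl | h
    · simp [BT.Rop, h, show w < p + 1 by omega, show w ≠ p by omega]
    · simp [BT.Rop]
    · rcases (show w = p + 1 ∨ p + 1 < w by omega) with rfl | h'
      · simp [BT.Rop]
      · simp [BT.Rop, show ¬ w < p by omega, show ¬ w < p + 1 by omega, show w ≠ p by omega,
          show w ≠ p + 1 by omega]

lemma fwd_aEl_betaEl (Q : Cfg k) (hQ : Q.state ≠ 0) (j : Fin 3)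
    (y : Option {x : ℤ // x ∈ Nset T m}) :
    fwd T Q.state (Q.tape Q.pos) ((cfgStep T Q).tape (cfgStep T Q).pos)
      (aEl T m (min Q.pos (cfgStep T Q).pos) y) (aEl T m (max Q.pos (cfgStep T Q).pos) y)
      (betaEl T m j Q y) = betaEl T m j (cfgStep T Q) y := by
  rcases hI : T.instr Q.state (Q.tape Q.pos) with ⟨s, d, i'⟩
  cases d <;> simp only [cfgStep, if_neg hQ, hI, fwd]
  · rw [min_eq_right (by omega), max_eq_left (by omega), Function.update_of_ne (by omega)]
    exact Lop_aEl_betaEl Q.state i' s Q.tape Q.pos j y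
  · rw [min_eq_left (by omega), max_eq_right (by omega), Function.update_of_ne (by omega)]
    exact Rop_aEl_betaEl Q.state i' s Q.tape Q.pos j y

lemma eq_of_fwd_eq {i : Fin (k + 1)} {r t : Bool} {x y v w : BT k}
    (h0 : fwd T i r t x y v ≠ BT.zero) (h : fwd T i r t x y w = fwd T i r t x y v) :
    w = v := by
  rcases hI : T.instr i r with ⟨s, d, i'⟩
  cases d <;> simp only [fwd, hI] at h h0 <;> cases v <;> cases w <;>
    simp only [BT.Lop, BT.Rop] at h h0 <;>
    first
      | (split_ifs at h h0 <;> simp_all)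
      | simp_all

lemma revOp_apply_apply {F : BT k → BT k → BT k → BT k} {x y v : BT k}
    (hF : ∀ w, F x y w = F x y v → w = v) (h0 : F x y v ≠ BT.zero) :
    revOp F x y (F x y v) = v := by
  have h : F x y v ≠ BT.zero ∧ ∃ w, F x y w = F x y v := ⟨h0, v, rfl⟩
  rw [revOp, dif_pos h]
  exact hF _ h.2.choose_spec

end Encoding

section Simulation

variable {k : ℕ} (T : TM k) (m : ℕ)

noncomputable def simStep (b : Bool) (Q : Cfg k) (f : AA T m) : AA T m :=
  if Q.state = 0 then f
  else fun y => mop T Q.state (Q.tape Q.pos) ((cfgStep T Q).tape (cfgStep T Q).pos) b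
      (aEl T m (min Q.pos (cfgStep T Q).pos) y) (aEl T m (max Q.pos (cfgStep T Q).pos) y) (f y)

noncomputable def simulate (Q : Cfg k) : ℕ → AA T m → AA T m
  | 0, f => f
  | l + 1, f => simStep T m false ((cfgStep T)^[l] Q) (simulate Q l f)

noncomputable def unsimulate (Q : Cfg k) : ℕ → AA T m → AA T m
  | 0, f => f
  | l + 1, f => unsimulate Q l (simStep T m true ((cfgStep T)^[l] Q) f)

variable {T m}

lemma simStep_false_betaEl (Q : Cfg k) (j : Fin 3) :
    simStep T m false Q (betaEl T m j Q) = betaEl T m j (cfgStep T Q) := by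
  by_cases hQ : Q.state = 0
  · simp [simStep, hQ, cfgStep]
  · funext y
    simpa [simStep, hQ, mop] using fwd_aEl_betaEl Q hQ j y

lemma simStep_true_betaEl (Q : Cfg k) (j : Fin 3) :
    simStep T m true Q (betaEl T m j (cfgStep T Q)) = betaEl T m j Q := by
  by_cases hQ : Q.state = 0
  · simp [simStep, hQ, cfgStep]
  · funext y
    have h := fwd_aEl_betaEl (m := m) Q hQ j y
    have h0 := h ▸ betaEl_ne_zero j (cfgStep T Q) y
    simp only [simStep, if_neg hQ, mop, ← h]
    exact revOp_apply_apply (fun _ => eq_of_fwd_eq h0) h0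

lemma simulate_betaEl (Q : Cfg k) (j : Fin 3) (l : ℕ) :
    simulate T m Q l (betaEl T m j Q) = betaEl T m j ((cfgStep T)^[l] Q) := by
  induction l with
  | zero => rfl
  | succ l ih =>
    rw [simulate, ih, simStep_false_betaEl, Function.iterate_succ_apply']

lemma unsimulate_betaEl (Q : Cfg k) (j : Fin 3) (l : ℕ) :
    unsimulate T m Q l (betaEl T m j ((cfgStep T)^[l] Q)) = betaEl T m j Q := by
  induction l with
  | zero => rfl
  | succ l ih =>
    rw [unsimulate, Function.iterate_succ_apply', simStep_true_betaEl, ih]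

lemma PolyK.simStep (b : Bool) {Q : Cfg k} (hQ : Q.pos ∈ Nset T m)
    (hQ' : (cfgStep T Q).pos ∈ Nset T m) {n : ℕ} {p : (Fin n → AA T m) → AA T m}
    (hp : PolyK T m p) : PolyK T m fun v => simStep T m b Q (p v) := by
  by_cases h : Q.state = 0
  · simpa [Paper.simStep, h] using hp
  · have hmin : min Q.pos (cfgStep T Q).pos ∈ Nset T m := by
      rcases min_choice Q.pos (cfgStep T Q).pos with e | e <;> rwa [e]
    have hmax : max Q.pos (cfgStep T Q).pos ∈ Nset T m := by
      rcases max_choice Q.pos (cfgStep T Q).pos with e | e <;> rwa [e]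
    simpa [Paper.simStep, h] using
      PolyK.mach _ h _ _ b (PolyK.const _ (InK.gen_a _ hmin))
        (PolyK.const _ (InK.gen_a _ hmax)) hp

variable {Q : Cfg k} {l : ℕ}

lemma PolyK.simulate (hN : ∀ l' ≤ l, ((cfgStep T)^[l'] Q).pos ∈ Nset T m) {n : ℕ}
    {p : (Fin n → AA T m) → AA T m} (hp : PolyK T m p) :
    PolyK T m fun v => simulate T m Q l (p v) := by
  induction l with
  | zero => exact hp
  | succ l ih =>
    refine PolyK.simStep false (hN l (by omega)) ?_ (ih fun l' hl' => hN l' (by omega))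
    rw [← Function.iterate_succ_apply' (cfgStep T)]
    exact hN (l + 1) le_rfl

lemma PolyK.unsimulate (hN : ∀ l' ≤ l, ((cfgStep T)^[l'] Q).pos ∈ Nset T m) {n : ℕ}
    {p : (Fin n → AA T m) → AA T m} (hp : PolyK T m p) :
    PolyK T m fun v => unsimulate T m Q l (p v) := by
  induction l generalizing p with
  | zero => exact hp
  | succ l ih =>
    refine ih (fun l' hl' => hN l' (by omega)) (PolyK.simStep true (hN l (by omega)) ?_ hp)
    rw [← Function.iterate_succ_apply' (cfgStep T)]
    exact hN (l + 1) le_rfl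

end Simulation

section Join

variable {k : ℕ} (T : TM k) (m : ℕ)

noncomputable def joinOp (f g : AA T m) : AA T m :=
  unsimulate T m (Q0 k) m fun y =>
    BT.T0 (simulate T m (Q0 k) m (fun y' => BT.T1 (f y') (g y')) y)

lemma iterate_Q0_pos_mem_Nset : ∀ l ≤ m, ((cfgStep T)^[l] (Q0 k)).pos ∈ Nset T m :=
  fun l hl => Finset.mem_union_left _ (Finset.mem_image.2 ⟨l, Finset.mem_range.2 (by omega), rfl⟩)

lemma bPolyK_joinOp : BPolyK T m (joinOp T m) :=
  PolyK.unsimulate (iterate_Q0_pos_mem_Nset T m) <| PolyK.t0 <|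
    PolyK.simulate (iterate_Q0_pos_mem_Nset T m) (PolyK.t1 (PolyK.proj 0) (PolyK.proj 1))

variable {T m}

lemma joinOp_qEl (hm : ((cfgStep T)^[m] (Q0 k)).state = 0) {a b c d : Fin 3}
    (hc : BT.T1 (k := k) (BT.P a) (BT.P b) = BT.P c) (hd : BT.T0 (k := k) (BT.P c) = BT.P d) :
    joinOp T m (qEl T m a) (qEl T m b) = qEl T m d := by
  rw [joinOp, T1_qEl hc, qEl_eq_betaEl_Q0, simulate_betaEl, T0_betaEl hm hd, unsimulate_betaEl,
    ← qEl_eq_betaEl_Q0]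

end Join

theorem statement16_general {k : ℕ} (T : TM k) (m : ℕ)
    (hm : ((cfgStep T)^[m] (Q0 k)).state = 0) :
    ∃ G : AA T m → AA T m → AA T m, BPolyK T m G ∧
      G (qEl T m 2) (qEl T m 2) = qEl T m 2 ∧
      G (qEl T m 0) (qEl T m 0) = qEl T m 0 ∧
      G (qEl T m 0) (qEl T m 2) = qEl T m 0 ∧
      G (qEl T m 2) (qEl T m 0) = qEl T m 0 :=
  ⟨joinOp T m, bPolyK_joinOp T m,
    joinOp_qEl hm (c := 2) (by simp [BT.T1]) rfl,
    joinOp_qEl hm (c := 1) (by simp [BT.T1]) rfl,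
    joinOp_qEl hm (c := 1) (by simp [BT.T1]) rfl,
    joinOp_qEl hm (c := 1) (by simp [BT.T1]) rfl⟩

/-- Lemma 4.2(5): there is a binary polynomial of K restricting to the
semilattice join on {q⁰,q²} (where q² < q⁰ componentwise). -/
theorem statement16 {k : ℕ} (hk : 0 < k) (T : TM k) (m : ℕ)
    (hm : ((cfgStep T)^[m] (Q0 k)).state = 0) :
    ∃ G : AA T m → AA T m → AA T m, BPolyK T m G ∧
      G (qEl T m 2) (qEl T m 2) = qEl T m 2 ∧
      G (qEl T m 0) (qEl T m 0) = qEl T m 0 ∧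
      G (qEl T m 0) (qEl T m 2) = qEl T m 0 ∧
      G (qEl T m 2) (qEl T m 0) = qEl T m 0 :=
  statement16_general T m hm

end Paper
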